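/- arXiv:2605.10285 — 6 statements merged into one kernel-verified Lean document; each statement's English description precedes it below -/
import Mathlib

section
/- Let Φ be a real n×p matrix, φ a real m×p matrix, and σ > 0. Then φ·φᵀ − φ·Φᵀ·(ΦΦᵀ + σ²·I_n)⁻¹·Φ·φᵀ = σ²·φ·(ΦᵀΦ + σ²·I_p)⁻¹·φᵀ. -/
open Matrix

lemma aux_posdef {k q : ℕ} (M : Matrix (Fin k) (Fin q) ℝ) {σ : ℝ} (hσ : 0 < σ) :
    (Mᵀ * M + σ ^ 2 • (1 : Matrix (Fin q) (Fin q) ℝ)).PosDef := by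
  have h1 : (σ ^ 2 • (1 : Matrix (Fin q) (Fin q) ℝ)).PosDef := by
    rw [smul_one_eq_diagonal]
    exact Matrix.posDef_diagonal_iff.mpr fun _ => by positivity
  have h2 : (Mᵀ * M).PosSemidef := by
    simpa using posSemidef_conjTranspose_mul_self M
  exact Matrix.PosDef.posSemidef_add h2 h1

/-- Predictive covariance identity:
`φφᵀ − φΦᵀ(ΦΦᵀ + σ²I_n)⁻¹Φφᵀ = σ²·φ(ΦᵀΦ + σ²I_p)⁻¹φᵀ`. -/
theorem stmt_3 {n p m : ℕ} (Φ : Matrix (Fin n) (Fin p) ℝ) (φ : Matrix (Fin m) (Fin p) ℝ)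
    (σ : ℝ) (hσ : 0 < σ) :
    φ * φᵀ - φ * Φᵀ * (Φ * Φᵀ + σ ^ 2 • (1 : Matrix (Fin n) (Fin n) ℝ))⁻¹ * Φ * φᵀ =
      σ ^ 2 • (φ * (Φᵀ * Φ + σ ^ 2 • (1 : Matrix (Fin p) (Fin p) ℝ))⁻¹ * φᵀ) := by
  set A := Φᵀ * Φ + σ ^ 2 • (1 : Matrix (Fin p) (Fin p) ℝ) with hA
  set B := Φ * Φᵀ + σ ^ 2 • (1 : Matrix (Fin n) (Fin n) ℝ) with hB
  have hAu : IsUnit A.det :=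
    (Matrix.isUnit_iff_isUnit_det A).mp (aux_posdef Φ hσ).isUnit
  have hBu : IsUnit B.det := by
    have := aux_posdef Φᵀ hσ
    rw [transpose_transpose] at this
    exact (Matrix.isUnit_iff_isUnit_det B).mp this.isUnit
  have hpush : Φᵀ * B = A * Φᵀ := by
    simp only [hA, hB, Matrix.mul_add, Matrix.add_mul, Matrix.mul_assoc,
      mul_smul_comm, smul_mul_assoc, Matrix.mul_one, Matrix.one_mul]
    simp only [Matrix.mul_smul, Matrix.smul_mul, Matrix.mul_one, Matrix.one_mul]
  have key : Φᵀ * B⁻¹ = A⁻¹ * Φᵀ := by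
    calc Φᵀ * B⁻¹ = A⁻¹ * (A * (Φᵀ * B⁻¹)) := by
          rw [← Matrix.mul_assoc, Matrix.nonsing_inv_mul _ hAu, Matrix.one_mul]
      _ = A⁻¹ * (Φᵀ * B * B⁻¹) := by rw [hpush]; rw [Matrix.mul_assoc]
      _ = A⁻¹ * Φᵀ := by rw [Matrix.mul_assoc, Matrix.mul_nonsing_inv _ hBu, Matrix.mul_one]
  have key2 : Φᵀ * B⁻¹ * Φ = 1 - σ ^ 2 • A⁻¹ := by
    rw [key]
    have hAA : Φᵀ * Φ = A - σ ^ 2 • (1 : Matrix (Fin p) (Fin p) ℝ) := by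
      rw [hA, add_sub_cancel_right]
    rw [Matrix.mul_assoc] at *
    calc A⁻¹ * (Φᵀ * Φ) = A⁻¹ * (A - σ ^ 2 • 1) := by rw [hAA]
      _ = 1 - σ ^ 2 • A⁻¹ := by
          rw [Matrix.mul_sub, Matrix.nonsing_inv_mul _ hAu, mul_smul_comm,
            Matrix.mul_one]
  calc φ * φᵀ - φ * Φᵀ * B⁻¹ * Φ * φᵀ
      = φ * φᵀ - φ * (Φᵀ * B⁻¹ * Φ) * φᵀ := by
        simp [Matrix.mul_assoc]
    _ = φ * φᵀ - φ * (1 - σ ^ 2 • A⁻¹) * φᵀ := by rw [key2]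
    _ = σ ^ 2 • (φ * A⁻¹ * φᵀ) := by
        rw [Matrix.mul_sub, Matrix.sub_mul, Matrix.mul_one]
        simp only [Matrix.mul_smul, Matrix.smul_mul]
        abel
end

section
/- Let n, p be positive natural numbers, v > 0 and ε > 0. Let L̂ and L be real n×p matrices such that Tr(L·Lᵀ) ≤ n·v and such that every row satisfies ‖L̂_{i·} − L_{i·}‖₂ < ε₁ for some ε₁ with 0 < ε₁ ≤ 1 and ε₁ < ε / (n·(2·√v + 1)). Then ‖L̂·L̂ᵀ − L·Lᵀ‖_F < ε. -/
open Matrix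

attribute [local instance] Matrix.frobeniusNormedAddCommGroup

/-- Frobenius norm of a real matrix: square root of the sum of squares of the entries. -/
noncomputable def frobNorm {m n : ℕ} (M : Matrix (Fin m) (Fin n) ℝ) : ℝ :=
  Real.sqrt (∑ i, ∑ j, M i j ^ 2)

lemma frobNorm_eq_norm {m n : ℕ} (M : Matrix (Fin m) (Fin n) ℝ) : frobNorm M = ‖M‖ := by
  rw [frobNorm, Matrix.frobenius_norm_def, ← Real.sqrt_eq_rpow]
  congr 1
  refine Finset.sum_congr rfl fun i _ => Finset.sum_congr rfl fun j _ => ?_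
  rw [Real.rpow_two, Real.norm_eq_abs, sq_abs]

/-- Quantitative content of the existence result (Proposition 1): if `Tr(LLᵀ) ≤ n·v` and every
row of `L̂ − L` has Euclidean norm less than `ε₁` where `0 < ε₁ ≤ 1` and
`ε₁ < ε / (n·(2√v + 1))`, then `‖L̂L̂ᵀ − LLᵀ‖_F < ε`. -/
theorem stmt_9 {n p : ℕ} (hn : 0 < n) (hp : 0 < p) (v ε ε₁ : ℝ) (hv : 0 < v) (hε : 0 < ε)
    (Lhat L : Matrix (Fin n) (Fin p) ℝ)
    (htr : Matrix.trace (L * Lᵀ) ≤ (n : ℝ) * v)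
    (hε₁pos : 0 < ε₁) (hε₁le : ε₁ ≤ 1)
    (hε₁lt : ε₁ < ε / ((n : ℝ) * (2 * Real.sqrt v + 1)))
    (hrow : ∀ i, Real.sqrt (∑ j, (Lhat i j - L i j) ^ 2) < ε₁) :
    frobNorm (Lhat * Lhatᵀ - L * Lᵀ) < ε := by
  set E : Matrix (Fin n) (Fin p) ℝ := Lhat - L with hEdef
  have hnpos : (0 : ℝ) < n := by exact_mod_cast hn
  have hden : (0 : ℝ) < (n : ℝ) * (2 * Real.sqrt v + 1) := by
    have h1 : (0 : ℝ) ≤ Real.sqrt v := Real.sqrt_nonneg v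
    positivity
  have hkey : ε₁ * ((n : ℝ) * (2 * Real.sqrt v + 1)) < ε := by
    rw [← lt_div_iff₀ hden]; exact hε₁lt
  -- bound on ‖E‖
  have hE2 : ‖E‖ ^ 2 ≤ (n : ℝ) * ε₁ ^ 2 := by
    rw [← frobNorm_eq_norm, frobNorm, Real.sq_sqrt (by positivity)]
    calc ∑ i, ∑ j, E i j ^ 2 ≤ ∑ _i : Fin n, ε₁ ^ 2 := by
          refine Finset.sum_le_sum fun i _ => ?_
          have h := hrow i
          have hs : (0 : ℝ) ≤ ∑ j, (Lhat i j - L i j) ^ 2 := by positivity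
          have h2 : ∑ j, (Lhat i j - L i j) ^ 2 < ε₁ ^ 2 := by
            have := Real.sq_sqrt hs
            nlinarith [hrow i, Real.sqrt_nonneg (∑ j, (Lhat i j - L i j) ^ 2)]
          simpa [hEdef, Matrix.sub_apply] using h2.le
      _ = (n : ℝ) * ε₁ ^ 2 := by simp [mul_comm]
  have hEnorm : ‖E‖ ≤ Real.sqrt n * ε₁ := by
    have h := Real.sqrt_le_sqrt hE2
    rwa [Real.sqrt_sq (norm_nonneg E), Real.sqrt_mul (by positivity),
      Real.sqrt_sq hε₁pos.le] at h
  -- bound on ‖L‖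
  have hL2 : ‖L‖ ^ 2 ≤ (n : ℝ) * v := by
    rw [← frobNorm_eq_norm, frobNorm, Real.sq_sqrt (by positivity)]
    calc ∑ i, ∑ j, L i j ^ 2 = Matrix.trace (L * Lᵀ) := by
          simp [Matrix.trace, Matrix.diag, Matrix.mul_apply, sq]
      _ ≤ (n : ℝ) * v := htr
  have hLnorm : ‖L‖ ≤ Real.sqrt n * Real.sqrt v := by
    have h := Real.sqrt_le_sqrt hL2
    rwa [Real.sqrt_sq (norm_nonneg L), Real.sqrt_mul (by positivity)] at h
  have hLhat : ‖Lhat‖ ≤ Real.sqrt n * Real.sqrt v + Real.sqrt n * ε₁ := by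
    have : Lhat = L + E := by simp [hEdef]
    calc ‖Lhat‖ = ‖L + E‖ := by rw [← this]
      _ ≤ ‖L‖ + ‖E‖ := norm_add_le _ _
      _ ≤ _ := add_le_add hLnorm hEnorm
  -- decomposition
  have hdecomp : Lhat * Lhatᵀ - L * Lᵀ = E * Lhatᵀ + L * Eᵀ := by
    simp only [hEdef, Matrix.transpose_sub, Matrix.sub_mul, Matrix.mul_sub]
    abel
  rw [frobNorm_eq_norm, hdecomp]
  have hb : ‖E * Lhatᵀ + L * Eᵀ‖ ≤ ‖E‖ * ‖Lhat‖ + ‖L‖ * ‖E‖ := by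
    calc ‖E * Lhatᵀ + L * Eᵀ‖ ≤ ‖E * Lhatᵀ‖ + ‖L * Eᵀ‖ := norm_add_le _ _
      _ ≤ ‖E‖ * ‖Lhatᵀ‖ + ‖L‖ * ‖Eᵀ‖ :=
          add_le_add (Matrix.frobenius_norm_mul _ _) (Matrix.frobenius_norm_mul _ _)
      _ = ‖E‖ * ‖Lhat‖ + ‖L‖ * ‖E‖ := by
          rw [Matrix.frobenius_norm_transpose, Matrix.frobenius_norm_transpose]
  have hsq : Real.sqrt n * Real.sqrt n = (n : ℝ) := Real.mul_self_sqrt (by positivity)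
  have hfinal : ‖E‖ * ‖Lhat‖ + ‖L‖ * ‖E‖ ≤ ε₁ * ((n : ℝ) * (2 * Real.sqrt v + 1)) := by
    have hEnn : (0 : ℝ) ≤ ‖E‖ := norm_nonneg _
    have hLnn : (0 : ℝ) ≤ ‖L‖ := norm_nonneg _
    have hLhnn : (0 : ℝ) ≤ ‖Lhat‖ := norm_nonneg _
    have h1 : ‖E‖ * ‖Lhat‖ ≤ (Real.sqrt n * ε₁) * (Real.sqrt n * Real.sqrt v + Real.sqrt n * ε₁) :=
      mul_le_mul hEnorm hLhat hLhnn (by positivity)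
    have h2 : ‖L‖ * ‖E‖ ≤ (Real.sqrt n * Real.sqrt v) * (Real.sqrt n * ε₁) :=
      mul_le_mul hLnorm hEnorm hEnn (by positivity)
    have hsv : (0 : ℝ) ≤ Real.sqrt v := Real.sqrt_nonneg v
    have e1 : Real.sqrt n * ε₁ * (Real.sqrt n * Real.sqrt v + Real.sqrt n * ε₁)
        = (n : ℝ) * (ε₁ * Real.sqrt v) + (n : ℝ) * ε₁ ^ 2 := by
      linear_combination (ε₁ * Real.sqrt v + ε₁ ^ 2) * hsq
    have e2 : Real.sqrt n * Real.sqrt v * (Real.sqrt n * ε₁)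
        = (n : ℝ) * (ε₁ * Real.sqrt v) := by
      linear_combination (Real.sqrt v * ε₁) * hsq
    have h3 : (n : ℝ) * ε₁ ^ 2 ≤ (n : ℝ) * ε₁ := by
      have h4 : ε₁ ^ 2 ≤ ε₁ := by nlinarith
      exact mul_le_mul_of_nonneg_left h4 hnpos.le
    have e3 : ε₁ * ((n : ℝ) * (2 * Real.sqrt v + 1))
        = (n : ℝ) * (ε₁ * Real.sqrt v) + (n : ℝ) * (ε₁ * Real.sqrt v) + (n : ℝ) * ε₁ := by ring
    linarith [h1, h2, e1, e2, e3, h3]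
  calc ‖E * Lhatᵀ + L * Eᵀ‖ ≤ ‖E‖ * ‖Lhat‖ + ‖L‖ * ‖E‖ := hb
    _ ≤ ε₁ * ((n : ℝ) * (2 * Real.sqrt v + 1)) := hfinal
    _ < ε := hkey
end

section
/- Let A and B be real symmetric positive semidefinite n×n matrices, and let A^{1/2}, B^{1/2} denote their unique positive semidefinite square roots. Then ‖A^{1/2} − B^{1/2}‖_F² ≤ √(rank(A − B)) · ‖A − B‖_F. -/
/-!
Put `D = SA - SB` and let `v` be a unit eigenvector of `D`, with eigenvalue `c`. Since
`SA * SA - SB * SB = SA * D + D * SB`, the quadratic form of `A - B` at `v` is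
`c * (vᵀ SA v + vᵀ SB v)`, while `c = vᵀ SA v - vᵀ SB v`; as both forms are nonnegative,
`c² ≤ |vᵀ (A - B) v|`. Summing over an orthonormal eigenbasis of `D` bounds `‖D‖_F²` by the
sum of the absolute diagonal entries of `A - B` in that basis, hence by its trace norm
`∑ |μₖ|`, and Cauchy–Schwarz over the `rank (A - B)` nonzero eigenvalues `μₖ` gives
`∑ |μₖ| ≤ √rank · ‖A - B‖_F`.
-/

open Matrix

theorem sum_abs_le_sqrt_card_mul_sqrt_sum_sq {ι : Type*} [Fintype ι] (f : ι → ℝ) :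
    ∑ i, |f i| ≤ √(Fintype.card {i // f i ≠ 0}) * √(∑ i, f i ^ 2) := by
  classical
  set s := Finset.univ.filter fun i => f i ≠ 0
  have hsupp : ∑ i, |f i| = ∑ i ∈ s, |f i| :=
    (Finset.sum_filter_of_ne fun i _ h => abs_ne_zero.mp h).symm
  have hcs : (∑ i ∈ s, |f i|) ^ 2 ≤ s.card * ∑ i, f i ^ 2 :=
    calc (∑ i ∈ s, |f i|) ^ 2 ≤ s.card * ∑ i ∈ s, |f i| ^ 2 := sq_sum_le_card_mul_sum_sq
      _ ≤ s.card * ∑ i, f i ^ 2 := by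
        simp only [sq_abs]
        exact mul_le_mul_of_nonneg_left (Finset.sum_le_sum_of_subset_of_nonneg
          (Finset.subset_univ s) fun i _ _ => sq_nonneg _) (Nat.cast_nonneg _)
  rw [Fintype.card_subtype, hsupp, ← Real.sqrt_mul (by positivity)]
  exact Real.le_sqrt_of_sq_le hcs

namespace Matrix
variable {n : Type*} [Fintype n] [DecidableEq n]

theorem IsHermitian.sum_sq_apply_eq_sum_sq_eigenvalues {M : Matrix n n ℝ} (hM : M.IsHermitian) :
    ∑ i, ∑ j, M i j ^ 2 = ∑ k, hM.eigenvalues k ^ 2 := by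
  have h : ∑ i, ∑ j, M i j ^ 2 = (M * M).trace := by
    simp only [trace, diag, mul_apply, sq]
    refine Finset.sum_congr rfl fun i _ => Finset.sum_congr rfl fun j _ => ?_
    rw [← hM.apply i j, star_trivial]
  conv_lhs => rw [h, hM.spectral_theorem]
  rw [← map_mul, Unitary.conjStarAlgAut_apply, trace_mul_cycle,
    Unitary.coe_star_mul_self, one_mul, diagonal_mul_diagonal, trace_diagonal]
  simp [sq]

theorem IsHermitian.dotProduct_mulVec_eq_sum {M : Matrix n n ℝ} (hM : M.IsHermitian)
    (x : n → ℝ) :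
    x ⬝ᵥ (M *ᵥ x) = ∑ k, hM.eigenvalues k * (⇑(hM.eigenvectorBasis k) ⬝ᵥ x) ^ 2 := by
  have hcoord : ∀ k, (star (hM.eigenvectorUnitary : Matrix n n ℝ) *ᵥ x) k =
      ⇑(hM.eigenvectorBasis k) ⬝ᵥ x := fun k => by
    simp [mulVec, dotProduct]
  have hvecMul :
      x ᵥ* hM.eigenvectorUnitary = star (hM.eigenvectorUnitary : Matrix n n ℝ) *ᵥ x := by
    rw [star_eq_conjTranspose, ← vecMul_transpose]; rfl
  conv_lhs => rw [hM.spectral_theorem, Unitary.conjStarAlgAut_apply, ← mulVec_mulVec,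
    ← mulVec_mulVec, dotProduct_mulVec, hvecMul]
  simp only [dotProduct, mulVec_diagonal, hcoord, Function.comp_apply,
    RCLike.ofReal_real_eq_id, id]
  refine Finset.sum_congr rfl fun k _ => ?_
  ring

theorem IsHermitian.sum_abs_dotProduct_mulVec_le {ι : Type*} [Fintype ι] {M : Matrix n n ℝ}
    (hM : M.IsHermitian) (b : OrthonormalBasis ι ℝ (EuclideanSpace ℝ n)) :
    ∑ i, |⇑(b i) ⬝ᵥ (M *ᵥ ⇑(b i))| ≤ ∑ k, |hM.eigenvalues k| := by
  have hparseval : ∀ k, ∑ i, (⇑(hM.eigenvectorBasis k) ⬝ᵥ ⇑(b i)) ^ 2 = 1 := fun k => by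
    simpa [EuclideanSpace.inner_eq_star_dotProduct] using
      b.sum_sq_inner_right (hM.eigenvectorBasis k)
  calc ∑ i, |⇑(b i) ⬝ᵥ (M *ᵥ ⇑(b i))|
      ≤ ∑ i, ∑ k, |hM.eigenvalues k| * (⇑(hM.eigenvectorBasis k) ⬝ᵥ ⇑(b i)) ^ 2 := by
        gcongr with i
        rw [hM.dotProduct_mulVec_eq_sum]
        refine (Finset.abs_sum_le_sum_abs _ _).trans_eq ?_
        simp only [abs_mul, abs_sq]
    _ = ∑ k, |hM.eigenvalues k| * ∑ i, (⇑(hM.eigenvectorBasis k) ⬝ᵥ ⇑(b i)) ^ 2 := by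
        rw [Finset.sum_comm]; simp only [Finset.mul_sum]
    _ = ∑ k, |hM.eigenvalues k| := by simp only [hparseval, mul_one]

theorem IsHermitian.sum_abs_eigenvalues_le {M : Matrix n n ℝ} (hM : M.IsHermitian) :
    ∑ k, |hM.eigenvalues k| ≤ √M.rank * √(∑ k, hM.eigenvalues k ^ 2) := by
  rw [hM.rank_eq_card_non_zero_eigs]
  exact sum_abs_le_sqrt_card_mul_sqrt_sum_sq _

theorem sq_le_abs_dotProduct_mul_self_sub_mul_self_mulVec {P Q : Matrix n n ℝ}
    (hP : P.PosSemidef) (hQ : Q.PosSemidef) {v : n → ℝ} (hv : v ⬝ᵥ v = 1) {c : ℝ}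
    (hc : (P - Q) *ᵥ v = c • v) :
    c ^ 2 ≤ |v ⬝ᵥ ((P * P - Q * Q) *ᵥ v)| := by
  set p := v ⬝ᵥ (P *ᵥ v)
  set q := v ⬝ᵥ (Q *ᵥ v)
  have hp : 0 ≤ p := by simpa using hP.dotProduct_mulVec_nonneg v
  have hq : 0 ≤ q := by simpa using hQ.dotProduct_mulVec_nonneg v
  have hc_eq : c = p - q := by
    simpa [sub_mulVec, dotProduct_sub, hv] using (congrArg (v ⬝ᵥ ·) hc).symm
  have hsymm : v ᵥ* (P - Q) = c • v := by
    rw [← mulVec_transpose, ← conjTranspose_eq_transpose_of_trivial, (hP.1.sub hQ.1).eq, hc]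
  have hquad : v ⬝ᵥ ((P * P - Q * Q) *ᵥ v) = c * (p + q) := by
    have hsplit : P * P - Q * Q = P * (P - Q) + (P - Q) * Q := by noncomm_ring
    rw [hsplit, add_mulVec, ← mulVec_mulVec, ← mulVec_mulVec, dotProduct_add, hc,
      dotProduct_mulVec v (P - Q), hsymm, mulVec_smul, dotProduct_smul, smul_dotProduct]
    simp only [smul_eq_mul, p, q]
    ring
  have hc_abs : |c| ≤ p + q := by rw [hc_eq, abs_le]; constructor <;> linarith
  calc c ^ 2 = |c| * |c| := by rw [abs_mul_abs_self, sq]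
    _ ≤ |c| * (p + q) := mul_le_mul_of_nonneg_left hc_abs (abs_nonneg c)
    _ = |v ⬝ᵥ ((P * P - Q * Q) *ᵥ v)| := by
        rw [hquad, abs_mul, abs_of_nonneg (add_nonneg hp hq)]

end Matrix

/-- Powers–Størmer-type bound: if `A, B` are symmetric positive semidefinite with (unique)
positive semidefinite square roots `S_A, S_B`, then
`‖A^{1/2} − B^{1/2}‖_F² ≤ √(rank(A − B)) · ‖A − B‖_F`. -/
theorem stmt_15 {n : ℕ} (A B : Matrix (Fin n) (Fin n) ℝ)
    (hA : A.PosSemidef) (hB : B.PosSemidef)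
    (SA SB : Matrix (Fin n) (Fin n) ℝ)
    (hSA : SA.PosSemidef) (hSAsq : SA * SA = A)
    (hSB : SB.PosSemidef) (hSBsq : SB * SB = B) :
    frobNorm (SA - SB) ^ 2 ≤ Real.sqrt ((A - B).rank) * frobNorm (A - B) := by
  have hD : (SA - SB).IsHermitian := hSA.1.sub hSB.1
  have hM : (A - B).IsHermitian := hA.1.sub hB.1
  set e := hD.eigenvectorBasis
  have heigen : ∀ k, hD.eigenvalues k ^ 2 ≤ |⇑(e k) ⬝ᵥ ((A - B) *ᵥ ⇑(e k))| := fun k => by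
    have hunit : ⇑(e k) ⬝ᵥ ⇑(e k) = 1 := by
      simpa only [EuclideanSpace.inner_eq_star_dotProduct, star_trivial] using e.inner_eq_one k
    rw [← hSAsq, ← hSBsq]
    exact sq_le_abs_dotProduct_mul_self_sub_mul_self_mulVec hSA hSB hunit
      (hD.mulVec_eigenvectorBasis k)
  calc frobNorm (SA - SB) ^ 2 = ∑ k, hD.eigenvalues k ^ 2 := by
        rw [frobNorm, Real.sq_sqrt (by positivity), hD.sum_sq_apply_eq_sum_sq_eigenvalues]
    _ ≤ ∑ k, |⇑(e k) ⬝ᵥ ((A - B) *ᵥ ⇑(e k))| := Finset.sum_le_sum fun k _ => heigen k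
    _ ≤ ∑ k, |hM.eigenvalues k| := hM.sum_abs_dotProduct_mulVec_le e
    _ ≤ √(A - B).rank * √(∑ k, hM.eigenvalues k ^ 2) := hM.sum_abs_eigenvalues_le
    _ = √(A - B).rank * frobNorm (A - B) := by
        rw [frobNorm, hM.sum_sq_apply_eq_sum_sq_eigenvalues]
end

section
/- Let U be a real orthogonal n×n matrix, λ ∈ ℝⁿ with λ₁ ≥ λ₂ ≥ … ≥ λ_n ≥ 0, and σ > 0. Set K = U·diag(λ)·Uᵀ, K_p = U·diag(λ̃)·Uᵀ with λ̃_i = λ_i for i ≤ p and 0 otherwise, and let Q be any real symmetric positive semidefinite n×n matrix. Let S, S_p and S_Q denote the unique positive semidefinite square roots of K·(K+σ²·I)⁻¹, K_p·(K_p+σ²·I)⁻¹ and Q·(Q+σ²·I)⁻¹ respectively. Then Tr[(S − S_p)·(S_p − S_Q)] ≤ 0. -/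
/-!
In the eigenbasis `U`, `S = U diag(f λ) Uᵀ` and `S_p = U diag(f λ̃) Uᵀ` with
`f x = √(x / (x + σ²))`. Since `f 0 = 0`, the difference `S - S_p` is positive semidefinite and
`(S - S_p) S_p = 0`, so `Tr[(S - S_p)(S_p - S_Q)] = -Tr[(S - S_p) S_Q]`, and the trace of a product
of positive semidefinite matrices is nonnegative.
-/

open Matrix
open scoped MatrixOrder ComplexOrder

namespace Matrix

variable {ι : Type*} [Fintype ι] [DecidableEq ι]

lemma PosSemidef.trace_mul_nonneg {𝕜 : Type*} [RCLike 𝕜] {A B : Matrix ι ι 𝕜}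
    (hA : A.PosSemidef) (hB : B.PosSemidef) : 0 ≤ (A * B).trace := by
  set R := CFC.sqrt B
  have hR : Rᴴ = R := (CFC.sqrt_nonneg B).posSemidef.1.eq
  calc 0 ≤ (R * A * Rᴴ).trace := (hA.mul_mul_conjTranspose_same R).trace_nonneg
    _ = (A * B).trace := by
      rw [hR, trace_mul_comm, ← mul_assoc, CFC.sqrt_mul_sqrt_self B hB.nonneg, trace_mul_comm]

lemma trace_mul_sub_nonpos_of_mul_eq_zero {𝕜 : Type*} [RCLike 𝕜] {A B C : Matrix ι ι 𝕜}
    (hAB : (A - B).PosSemidef) (horth : (A - B) * B = 0) (hC : C.PosSemidef) :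
    ((A - B) * (B - C)).trace ≤ 0 := by
  rw [mul_sub, horth, zero_sub, trace_neg, neg_nonpos]
  exact hAB.trace_mul_nonneg hC

section CommRing

variable {R : Type*} [CommRing R] {U : Matrix ι ι R}

lemma conj_diagonal_mul_conj_diagonal (hU : Uᵀ * U = 1) (d e : ι → R) :
    U * diagonal d * Uᵀ * (U * diagonal e * Uᵀ) = U * diagonal (fun i => d i * e i) * Uᵀ := by
  rw [mul_assoc, mul_assoc, ← mul_assoc Uᵀ, ← mul_assoc Uᵀ, hU, one_mul,
    ← mul_assoc (diagonal d), diagonal_mul_diagonal, mul_assoc]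

lemma conj_diagonal_sub_conj_diagonal (d e : ι → R) :
    U * diagonal d * Uᵀ - U * diagonal e * Uᵀ = U * diagonal (fun i => d i - e i) * Uᵀ := by
  rw [← sub_mul, ← mul_sub, diagonal_sub]

lemma conj_diagonal_add_smul_one (hU : U * Uᵀ = 1) (d : ι → R) (c : R) :
    U * diagonal d * Uᵀ + c • 1 = U * diagonal (fun i => d i + c) * Uᵀ := by
  rw [← diagonal_add, mul_add, add_mul, ← smul_one_eq_diagonal, Matrix.mul_smul, mul_one,
    Matrix.smul_mul, hU]

end CommRing

section Field

variable {K : Type*} [Field K] {U : Matrix ι ι K}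

lemma conj_diagonal_inv (hU : U * Uᵀ = 1) {d : ι → K} (hd : ∀ i, d i ≠ 0) :
    (U * diagonal d * Uᵀ)⁻¹ = U * diagonal (fun i => (d i)⁻¹) * Uᵀ := by
  refine inv_eq_right_inv ?_
  rw [conj_diagonal_mul_conj_diagonal (mul_eq_one_comm.mp hU)]
  simp only [mul_inv_cancel₀ (hd _), diagonal_one, mul_one, hU]

lemma conj_diagonal_mul_inv_add_smul_one (hU : U * Uᵀ = 1) {d : ι → K} {c : K}
    (hd : ∀ i, d i + c ≠ 0) :
    U * diagonal d * Uᵀ * (U * diagonal d * Uᵀ + c • 1)⁻¹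
      = U * diagonal (fun i => d i / (d i + c)) * Uᵀ := by
  rw [conj_diagonal_add_smul_one hU, conj_diagonal_inv hU hd,
    conj_diagonal_mul_conj_diagonal (mul_eq_one_comm.mp hU)]
  simp only [div_eq_mul_inv]

end Field

section Real

variable {U : Matrix ι ι ℝ}

lemma posSemidef_conj_diagonal {d : ι → ℝ} (hd : ∀ i, 0 ≤ d i) :
    (U * diagonal d * Uᵀ).PosSemidef := by
  simpa [conjTranspose_eq_transpose_of_trivial] using
    (PosSemidef.diagonal hd).mul_mul_conjTranspose_same U

lemma eq_conj_diagonal_sqrt_of_mul_self_eq (hU : U * Uᵀ = 1) {d : ι → ℝ} (hd : ∀ i, 0 ≤ d i)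
    {S : Matrix ι ι ℝ} (hS : S.PosSemidef) (hSS : S * S = U * diagonal d * Uᵀ) :
    S = U * diagonal (fun i => √(d i)) * Uᵀ := by
  refine (CFC.mul_self_eq_mul_self_iff S _ hS.nonneg
    (posSemidef_conj_diagonal fun i => Real.sqrt_nonneg (d i)).nonneg).mp ?_
  rw [hSS, conj_diagonal_mul_conj_diagonal (mul_eq_one_comm.mp hU)]
  simp only [Real.mul_self_sqrt (hd _)]

lemma eq_conj_diagonal_sqrt_of_mul_self_eq_mul_inv_add_smul_one (hU : U * Uᵀ = 1) {d : ι → ℝ}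
    (hd : ∀ i, 0 ≤ d i) {c : ℝ} (hc : 0 < c) {S : Matrix ι ι ℝ} (hS : S.PosSemidef)
    (hSS : S * S = U * diagonal d * Uᵀ * (U * diagonal d * Uᵀ + c • 1)⁻¹) :
    S = U * diagonal (fun i => √(d i / (d i + c))) * Uᵀ := by
  have hpos (i : ι) : 0 < d i + c := add_pos_of_nonneg_of_pos (hd i) hc
  rw [conj_diagonal_mul_inv_add_smul_one hU fun i => (hpos i).ne'] at hSS
  exact eq_conj_diagonal_sqrt_of_mul_self_eq hU (fun i => div_nonneg (hd i) (hpos i).le) hS hSS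

end Real

end Matrix

theorem stmt_16_general {n : ℕ} (U : Matrix (Fin n) (Fin n) ℝ) (hU : U * Uᵀ = 1)
    (lam : Fin n → ℝ) (hnn : ∀ i, 0 ≤ lam i)
    (σ : ℝ) (hσ : 0 < σ) (p : ℕ)
    (K Kp : Matrix (Fin n) (Fin n) ℝ)
    (hK : K = U * Matrix.diagonal lam * Uᵀ)
    (hKp : Kp = U * Matrix.diagonal (fun i : Fin n => if (i : ℕ) < p then lam i else 0) * Uᵀ)
    (S Sp SQ : Matrix (Fin n) (Fin n) ℝ)
    (hS : S.PosSemidef) (hSsq : S * S = K * (K + σ ^ 2 • (1 : Matrix (Fin n) (Fin n) ℝ))⁻¹)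
    (hSp : Sp.PosSemidef)
    (hSpsq : Sp * Sp = Kp * (Kp + σ ^ 2 • (1 : Matrix (Fin n) (Fin n) ℝ))⁻¹)
    (hSQ : SQ.PosSemidef) :
    Matrix.trace ((S - Sp) * (Sp - SQ)) ≤ 0 := by
  set f : ℝ → ℝ := fun x => √(x / (x + σ ^ 2))
  set lamp : Fin n → ℝ := fun i => if (i : ℕ) < p then lam i else 0
  have hlamp (i : Fin n) : 0 ≤ lamp i := by dsimp only [lamp]; split_ifs <;> simp [hnn]
  have hσ2 : 0 < σ ^ 2 := by positivity
  have hS' : S = U * diagonal (fun i => f (lam i)) * Uᵀ :=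
    eq_conj_diagonal_sqrt_of_mul_self_eq_mul_inv_add_smul_one hU hnn hσ2 hS (hK ▸ hSsq)
  have hSp' : Sp = U * diagonal (fun i => f (lamp i)) * Uᵀ :=
    eq_conj_diagonal_sqrt_of_mul_self_eq_mul_inv_add_smul_one hU hlamp hσ2 hSp (hKp ▸ hSpsq)
  have hf_lamp (i : Fin n) : f (lamp i) = if (i : ℕ) < p then f (lam i) else 0 := by
    split_ifs with h <;> simp [lamp, f, h]
  have hdiff (i : Fin n) : 0 ≤ f (lam i) - f (lamp i) := by
    rw [hf_lamp]; split_ifs <;> simp [f]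
  have horth (i : Fin n) : (f (lam i) - f (lamp i)) * f (lamp i) = 0 := by
    rw [hf_lamp]; split_ifs <;> simp
  refine trace_mul_sub_nonpos_of_mul_eq_zero ?_ ?_ hSQ
  · rw [hS', hSp', conj_diagonal_sub_conj_diagonal]
    exact posSemidef_conj_diagonal hdiff
  · rw [hS', hSp', conj_diagonal_sub_conj_diagonal,
      conj_diagonal_mul_conj_diagonal (mul_eq_one_comm.mp hU)]
    simp only [horth, diagonal_zero, mul_zero, zero_mul]

/-- Nonpositivity of the cross term in the covariance part of the Wasserstein-2 posterior
bound: with `K = U diag(λ) Uᵀ` (`U` orthogonal, `λ` nonincreasing, nonnegative), `K_p` its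
rank-`p` truncation, `Q` any symmetric positive semidefinite matrix, and `S, S_p, S_Q` the
(unique) positive semidefinite square roots of `K(K+σ²I)⁻¹`, `K_p(K_p+σ²I)⁻¹`, `Q(Q+σ²I)⁻¹`,
we have `Tr[(S − S_p)(S_p − S_Q)] ≤ 0`. -/
theorem stmt_16 {n : ℕ} (U : Matrix (Fin n) (Fin n) ℝ) (hU : U * Uᵀ = 1)
    (lam : Fin n → ℝ) (hmono : Antitone lam) (hnn : ∀ i, 0 ≤ lam i)
    (σ : ℝ) (hσ : 0 < σ) (p : ℕ)
    (K Kp : Matrix (Fin n) (Fin n) ℝ)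
    (hK : K = U * Matrix.diagonal lam * Uᵀ)
    (hKp : Kp = U * Matrix.diagonal (fun i : Fin n => if (i : ℕ) < p then lam i else 0) * Uᵀ)
    (Q : Matrix (Fin n) (Fin n) ℝ) (hQ : Q.PosSemidef)
    (S Sp SQ : Matrix (Fin n) (Fin n) ℝ)
    (hS : S.PosSemidef) (hSsq : S * S = K * (K + σ ^ 2 • (1 : Matrix (Fin n) (Fin n) ℝ))⁻¹)
    (hSp : Sp.PosSemidef)
    (hSpsq : Sp * Sp = Kp * (Kp + σ ^ 2 • (1 : Matrix (Fin n) (Fin n) ℝ))⁻¹)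
    (hSQ : SQ.PosSemidef)
    (hSQsq : SQ * SQ = Q * (Q + σ ^ 2 • (1 : Matrix (Fin n) (Fin n) ℝ))⁻¹) :
    Matrix.trace ((S - Sp) * (Sp - SQ)) ≤ 0 :=
  stmt_16_general U hU lam hnn σ hσ p K Kp hK hKp S Sp SQ hS hSsq hSp hSpsq hSQ
end

section
/- Let U be a real orthogonal n×n matrix, λ ∈ ℝⁿ with λ₁ ≥ λ₂ ≥ … ≥ λ_n ≥ 0, σ > 0, 0 ≤ p < n, and set K = U·diag(λ)·Uᵀ and K_p = U·diag(λ̃)·Uᵀ with λ̃_i = λ_i for i ≤ p and 0 otherwise. Let Q be a real symmetric positive semidefinite n×n matrix with ‖K_p − Q‖_F ≤ ε. Then for every y ∈ ℝⁿ, ‖K·(K+σ²·I)⁻¹·y − Q·(Q+σ²·I)⁻¹·y‖₂ ≤ (λ_{p+1}/σ² + ε/σ²) · ‖y‖₂. -/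
open Matrix

/-- Euclidean norm of a vector in `ℝⁿ`. -/
noncomputable def euclNorm {n : ℕ} (v : Fin n → ℝ) : ℝ :=
  Real.sqrt (∑ i, v i ^ 2)

/-! With `s = σ²`, the resolvent identity `K(K+s)⁻¹ - Q(Q+s)⁻¹ = s (K+s)⁻¹ (K - Q) (Q+s)⁻¹`
reduces the claim to spectral-norm bounds. Both resolvents have norm at most `1/s` because `K` and
`Q` are positive semidefinite, and `‖K - Q‖ ≤ ‖K - K_p‖ + ‖K_p - Q‖ ≤ λ_{p+1} + ε`: the truncation
error `K - K_p = U diag(0,…,0,λ_{p+1},…,λ_n) Uᵀ` has spectral norm `λ_{p+1}`, and the spectral norm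
is dominated by the Frobenius norm. -/

open scoped Matrix.Norms.L2Operator RealInnerProductSpace

namespace Matrix

variable {n : Type*} [Fintype n] [DecidableEq n]

lemma posSemidef_mul_diagonal_mul_transpose (U : Matrix n n ℝ) {d : n → ℝ} (hd : 0 ≤ d) :
    (U * diagonal d * Uᵀ).PosSemidef := by
  simpa using (PosSemidef.diagonal hd).mul_mul_conjTranspose_same U

lemma isUnit_det_add_smul_one {A : Matrix n n ℝ} (hA : A.PosSemidef) {s : ℝ} (hs : 0 < s) :
    IsUnit (A + s • (1 : Matrix n n ℝ)).det :=
  (isUnit_iff_isUnit_det _).mp <|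
    (PosDef.posSemidef_add hA (by simpa [smul_one_eq_diagonal] using fun _ => hs)).isUnit

lemma mul_inv_add_smul_one_sub_mul_inv_add_smul_one {R : Type*} [CommRing R]
    (A B : Matrix n n R) {s : R}
    (hA : IsUnit (A + s • (1 : Matrix n n R)).det) (hB : IsUnit (B + s • (1 : Matrix n n R)).det) :
    A * (A + s • 1)⁻¹ - B * (B + s • 1)⁻¹ = s • ((A + s • 1)⁻¹ * (A - B) * (B + s • 1)⁻¹) := by
  have hA' : A * (A + s • 1)⁻¹ = 1 - s • (A + s • 1)⁻¹ := by
    rw [eq_sub_iff_add_eq, ← smul_one_mul s (A + s • 1)⁻¹, ← add_mul, mul_nonsing_inv _ hA]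
  have hB' : B * (B + s • 1)⁻¹ = 1 - s • (B + s • 1)⁻¹ := by
    rw [eq_sub_iff_add_eq, ← smul_one_mul s (B + s • 1)⁻¹, ← add_mul, mul_nonsing_inv _ hB]
  have hAB : A - B = (A + s • 1) - (B + s • 1) := by abel
  rw [hA', hB', hAB, mul_sub, sub_mul, nonsing_inv_mul _ hA, mul_assoc, mul_nonsing_inv _ hB,
    one_mul, mul_one, smul_sub]
  abel

lemma l2_opNorm_orthogonal_conj {U : Matrix n n ℝ} (hU : U * Uᵀ = 1) (A : Matrix n n ℝ) :
    ‖U * A * Uᵀ‖ = ‖A‖ := by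
  have hUu : U ∈ unitaryGroup n ℝ := by
    rwa [mem_unitaryGroup_iff, star_eq_conjTranspose, conjTranspose_eq_transpose_of_trivial]
  have hUtu : Uᵀ ∈ unitaryGroup n ℝ := by
    rw [mem_unitaryGroup_iff, star_eq_conjTranspose, conjTranspose_eq_transpose_of_trivial,
      transpose_transpose]
    exact mul_eq_one_comm.mp hU
  rw [CStarRing.norm_mul_mem_unitary _ hUtu, CStarRing.norm_mem_unitary_mul _ hUu]

lemma mul_norm_le_norm_toEuclideanCLM_add_smul_one {A : Matrix n n ℝ} (hA : A.PosSemidef) (s : ℝ)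
    (x : EuclideanSpace ℝ n) :
    s * ‖x‖ ≤ ‖toEuclideanCLM (𝕜 := ℝ) (A + s • 1) x‖ := by
  have hcoercive : s * ‖x‖ ^ 2 ≤ ⟪x, toEuclideanCLM (𝕜 := ℝ) (A + s • 1) x⟫ := by
    have hx : x.ofLp ⬝ᵥ x.ofLp = ‖x‖ ^ 2 := by
      rw [← real_inner_self_eq_norm_sq, EuclideanSpace.inner_eq_star_dotProduct, star_trivial]
    have hAx : 0 ≤ x.ofLp ⬝ᵥ A *ᵥ x.ofLp := by
      simpa using hA.dotProduct_mulVec_nonneg x.ofLp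
    rw [inner_toEuclideanCLM, add_mulVec, dotProduct_add, smul_mulVec, one_mulVec,
      dotProduct_smul, smul_eq_mul, hx]
    linarith
  have hcs := real_inner_le_norm x (toEuclideanCLM (𝕜 := ℝ) (A + s • 1) x)
  rcases (norm_nonneg x).eq_or_lt with hx0 | hxpos
  · rw [← hx0, mul_zero]; exact norm_nonneg _
  · nlinarith

lemma l2_opNorm_inv_add_smul_one_le {A : Matrix n n ℝ} (hA : A.PosSemidef) {s : ℝ} (hs : 0 < s) :
    ‖(A + s • (1 : Matrix n n ℝ))⁻¹‖ ≤ s⁻¹ := by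
  have hdet := isUnit_det_add_smul_one hA hs
  rw [← l2_opNorm_toEuclideanCLM]
  refine ContinuousLinearMap.opNorm_le_bound _ (inv_nonneg.mpr hs.le) fun y => ?_
  have h := mul_norm_le_norm_toEuclideanCLM_add_smul_one hA s
    (toEuclideanCLM (𝕜 := ℝ) (A + s • 1)⁻¹ y)
  rw [← mul_apply_eq_comp, ← map_mul, mul_nonsing_inv _ hdet, map_one, one_apply_eq_self] at h
  rw [inv_mul_eq_div, le_div_iff₀' hs]
  exact h

end Matrix

lemma euclNorm_eq_norm {n : ℕ} (v : Fin n → ℝ) : euclNorm v = ‖WithLp.toLp 2 v‖ := by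
  simp [euclNorm, EuclideanSpace.norm_eq]

lemma euclNorm_mulVec_le {n : ℕ} (A : Matrix (Fin n) (Fin n) ℝ) (v : Fin n → ℝ) :
    euclNorm (A *ᵥ v) ≤ ‖A‖ * euclNorm v := by
  simpa [euclNorm_eq_norm] using l2_opNorm_mulVec A (WithLp.toLp 2 v)

lemma l2_opNorm_le_frobNorm {m n : ℕ} (A : Matrix (Fin m) (Fin n) ℝ) : ‖A‖ ≤ frobNorm A := by
  rw [l2_opNorm_def]
  refine ContinuousLinearMap.opNorm_le_bound _ (Real.sqrt_nonneg _) fun x => ?_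
  have hx : ‖x‖ = euclNorm x.ofLp := by rw [euclNorm_eq_norm, WithLp.toLp_ofLp]
  rw [hx, ← euclNorm_eq_norm, frobNorm, euclNorm, euclNorm, ← Real.sqrt_mul (by positivity)]
  refine Real.sqrt_le_sqrt ?_
  rw [Finset.sum_mul]
  refine Finset.sum_le_sum fun i _ => ?_
  exact Finset.sum_mul_sq_le_sq_mul_sq Finset.univ (A i) x.ofLp

lemma norm_sub_truncate_le {n : ℕ} {lam : Fin n → ℝ} (hmono : Antitone lam)
    (hnn : ∀ i, 0 ≤ lam i) {p : ℕ} (hp : p < n) :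
    ‖lam - fun i : Fin n => if (i : ℕ) < p then lam i else 0‖ ≤ lam ⟨p, hp⟩ := by
  refine (pi_norm_le_iff_of_nonneg (hnn _)).mpr fun i => ?_
  by_cases hi : (i : ℕ) < p
  · simpa [hi] using hnn _
  · simpa [hi, abs_of_nonneg (hnn i)] using hmono (show (⟨p, hp⟩ : Fin n) ≤ i from not_lt.mp hi)

/-- Mean term of the posterior Wasserstein-2 bound: with `K = U diag(λ) Uᵀ` (`U` orthogonal,
`λ` nonincreasing, nonnegative), `K_p` the rank-`p` truncation (`p < n`), and `Q` symmetric
positive semidefinite with `‖K_p − Q‖_F ≤ ε`, for every `y`,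
`‖K(K+σ²I)⁻¹y − Q(Q+σ²I)⁻¹y‖₂ ≤ (λ_{p+1}/σ² + ε/σ²)·‖y‖₂`. -/
theorem stmt_17 {n : ℕ} (U : Matrix (Fin n) (Fin n) ℝ) (hU : U * Uᵀ = 1)
    (lam : Fin n → ℝ) (hmono : Antitone lam) (hnn : ∀ i, 0 ≤ lam i)
    (σ : ℝ) (hσ : 0 < σ) (p : ℕ) (hp : p < n) (ε : ℝ)
    (K Kp : Matrix (Fin n) (Fin n) ℝ)
    (hK : K = U * Matrix.diagonal lam * Uᵀ)
    (hKp : Kp = U * Matrix.diagonal (fun i : Fin n => if (i : ℕ) < p then lam i else 0) * Uᵀ)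
    (Q : Matrix (Fin n) (Fin n) ℝ) (hQ : Q.PosSemidef)
    (hQε : frobNorm (Kp - Q) ≤ ε) (y : Fin n → ℝ) :
    euclNorm ((K * (K + σ ^ 2 • (1 : Matrix (Fin n) (Fin n) ℝ))⁻¹).mulVec y -
        (Q * (Q + σ ^ 2 • (1 : Matrix (Fin n) (Fin n) ℝ))⁻¹).mulVec y) ≤
      (lam ⟨p, hp⟩ / σ ^ 2 + ε / σ ^ 2) * euclNorm y := by
  set s := σ ^ 2
  have hs : 0 < s := by positivity
  have hKpsd : K.PosSemidef := hK ▸ posSemidef_mul_diagonal_mul_transpose U hnn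
  have htail : ‖K - Kp‖ ≤ lam ⟨p, hp⟩ := by
    rw [hK, hKp, ← sub_mul, ← mul_sub, diagonal_sub, l2_opNorm_orthogonal_conj hU,
      l2_opNorm_diagonal]
    exact norm_sub_truncate_le hmono hnn hp
  have hfit : ‖Kp - Q‖ ≤ ε := (l2_opNorm_le_frobNorm _).trans hQε
  have hKQ : ‖K - Q‖ ≤ lam ⟨p, hp⟩ + ε :=
    (norm_sub_le_norm_sub_add_norm_sub K Kp Q).trans (add_le_add htail hfit)
  have hRK := l2_opNorm_inv_add_smul_one_le hKpsd hs
  have hRQ := l2_opNorm_inv_add_smul_one_le hQ hs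
  rw [← sub_mulVec, mul_inv_add_smul_one_sub_mul_inv_add_smul_one K Q
    (isUnit_det_add_smul_one hKpsd hs) (isUnit_det_add_smul_one hQ hs)]
  refine (euclNorm_mulVec_le _ y).trans (mul_le_mul_of_nonneg_right ?_ (Real.sqrt_nonneg _))
  calc ‖s • ((K + s • 1)⁻¹ * (K - Q) * (Q + s • 1)⁻¹)‖
      ≤ s * (‖(K + s • 1)⁻¹‖ * ‖K - Q‖ * ‖(Q + s • 1)⁻¹‖) := by
        rw [norm_smul, Real.norm_of_nonneg hs.le]
        gcongr
        exact norm_mul₃_le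
    _ ≤ s * (s⁻¹ * (lam ⟨p, hp⟩ + ε) * s⁻¹) := by
        gcongr
        exact mul_nonneg (inv_nonneg.mpr hs.le) ((norm_nonneg _).trans hKQ)
    _ = lam ⟨p, hp⟩ / s + ε / s := by
        field_simp
end

section
/- Let U be a real orthogonal n×n matrix, λ ∈ ℝⁿ with λ₁ ≥ λ₂ ≥ … ≥ λ_n ≥ 0, σ > 0, 0 ≤ p < n, and set K = U·diag(λ)·Uᵀ and K_p = U·diag(λ̃)·Uᵀ with λ̃_i = λ_i for i ≤ p and 0 otherwise. Let Q be a real symmetric positive semidefinite n×n matrix with rank(Q) ≤ p and ‖K_p − Q‖_F ≤ ε. Let S and S_Q denote the unique positive semidefinite square roots of K·(K+σ²·I)⁻¹ and Q·(Q+σ²·I)⁻¹ respectively. Then ‖S − S_Q‖_F² ≤ Σ_{i>p} λ_i/(λ_i + σ²) + √(2p)·ε/σ². -/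
open Matrix

/-!
By the Powers–Størmer inequality, `‖S - S_Q‖_F² ≤ ‖S² - S_Q²‖₁` (trace norm). Split
`S² - S_Q² = (K(K+σ²)⁻¹ - K_p(K_p+σ²)⁻¹) + (K_p(K_p+σ²)⁻¹ - Q(Q+σ²)⁻¹)`. The first summand is
positive semidefinite with eigenvalues `λᵢ/(λᵢ+σ²)`, `i ≥ p`, so its trace norm is the tail sum.
By the resolvent identity the second is `σ²(Q+σ²)⁻¹(K_p - Q)(K_p+σ²)⁻¹`: its Frobenius norm is
at most `ε/σ²` and its rank at most `2p`, so by Cauchy–Schwarz on its eigenvalues its trace norm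
is at most `√(2p)·ε/σ²`.
-/

namespace Matrix

variable {ι : Type*} [Fintype ι]

noncomputable def frobSq (M : Matrix ι ι ℝ) : ℝ := ∑ i, ∑ j, M i j ^ 2

lemma frobSq_nonneg (M : Matrix ι ι ℝ) : 0 ≤ frobSq M := by
  unfold frobSq; positivity

lemma frobSq_eq_trace (M : Matrix ι ι ℝ) : frobSq M = (Mᵀ * M).trace := by
  rw [frobSq, Finset.sum_comm]
  simp [trace, mul_apply, sq]

lemma frobSq_transpose (M : Matrix ι ι ℝ) : frobSq Mᵀ = frobSq M :=
  Finset.sum_comm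

lemma frobSq_smul (c : ℝ) (M : Matrix ι ι ℝ) : frobSq (c • M) = c ^ 2 * frobSq M := by
  simp only [frobSq, smul_apply, smul_eq_mul, mul_pow, Finset.mul_sum]

variable [DecidableEq ι]

lemma frobSq_orthogonal_mul {V : Matrix ι ι ℝ} (hV : Vᵀ * V = 1) (M : Matrix ι ι ℝ) :
    frobSq (V * M) = frobSq M := by
  rw [frobSq_eq_trace, frobSq_eq_trace, transpose_mul, Matrix.mul_assoc, ← Matrix.mul_assoc Vᵀ, hV,
    Matrix.one_mul]

lemma frobSq_mul_orthogonal {V : Matrix ι ι ℝ} (hV : V * Vᵀ = 1) (M : Matrix ι ι ℝ) :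
    frobSq (M * V) = frobSq M := by
  rw [← frobSq_transpose, transpose_mul, frobSq_orthogonal_mul (by rwa [transpose_transpose]),
    frobSq_transpose]

lemma frobSq_diagonal (d : ι → ℝ) : frobSq (diagonal d) = ∑ i, d i ^ 2 := by
  simp [frobSq, diagonal_apply, ite_pow]

lemma frobSq_diagonal_mul_le {d : ι → ℝ} {c : ℝ} (hd : ∀ i, |d i| ≤ c) (M : Matrix ι ι ℝ) :
    frobSq (diagonal d * M) ≤ c ^ 2 * frobSq M := by
  simp only [frobSq, diagonal_mul, mul_pow, Finset.mul_sum]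
  exact Finset.sum_le_sum fun i _ => Finset.sum_le_sum fun j _ =>
    mul_le_mul_of_nonneg_right (sq_le_sq' (abs_le.mp (hd i)).1 (abs_le.mp (hd i)).2) (sq_nonneg _)

def conjDiagonal (U : Matrix ι ι ℝ) (d : ι → ℝ) : Matrix ι ι ℝ := U * diagonal d * Uᵀ

section conjDiagonal

variable {U : Matrix ι ι ℝ}

lemma conjDiagonal_add (d e : ι → ℝ) :
    conjDiagonal U d + conjDiagonal U e = conjDiagonal U (d + e) := by
  rw [conjDiagonal, conjDiagonal, conjDiagonal, ← Matrix.add_mul, ← Matrix.mul_add, diagonal_add]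
  rfl

lemma conjDiagonal_sub (d e : ι → ℝ) :
    conjDiagonal U d - conjDiagonal U e = conjDiagonal U (d - e) := by
  rw [conjDiagonal, conjDiagonal, conjDiagonal, ← Matrix.sub_mul, ← Matrix.mul_sub, diagonal_sub]
  rfl

lemma conjDiagonal_mul (hU : U * Uᵀ = 1) (d e : ι → ℝ) :
    conjDiagonal U d * conjDiagonal U e = conjDiagonal U (d * e) := by
  have hU' : Uᵀ * U = 1 := mul_eq_one_comm.mp hU
  rw [conjDiagonal, conjDiagonal, conjDiagonal,
    show U * diagonal d * Uᵀ * (U * diagonal e * Uᵀ) = U * (diagonal d * (Uᵀ * U) * diagonal e) * Uᵀ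
      by noncomm_ring, hU', Matrix.mul_one, diagonal_mul_diagonal]
  rfl

lemma conjDiagonal_const (hU : U * Uᵀ = 1) (c : ℝ) : conjDiagonal U (fun _ => c) = c • 1 := by
  rw [conjDiagonal, ← smul_one_eq_diagonal, Matrix.mul_smul, Matrix.mul_one, Matrix.smul_mul, hU]

lemma conjDiagonal_inv (hU : U * Uᵀ = 1) {d : ι → ℝ} (hd : ∀ i, d i ≠ 0) :
    (conjDiagonal U d)⁻¹ = conjDiagonal U d⁻¹ := by
  refine inv_eq_right_inv ?_
  rw [conjDiagonal_mul hU, show d * d⁻¹ = fun _ => 1 from funext fun i => mul_inv_cancel₀ (hd i),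
    conjDiagonal_const hU, one_smul]

lemma conjDiagonal_mul_inv_add_smul_one (hU : U * Uᵀ = 1) {d : ι → ℝ} {c : ℝ}
    (hd : ∀ i, d i + c ≠ 0) :
    conjDiagonal U d * (conjDiagonal U d + c • 1)⁻¹ =
      conjDiagonal U (fun i => d i / (d i + c)) := by
  rw [← conjDiagonal_const hU, conjDiagonal_add, conjDiagonal_inv hU (d := d + fun _ => c) hd,
    conjDiagonal_mul hU]
  rfl

lemma transpose_mul_conjDiagonal_mul (hU : U * Uᵀ = 1) (d : ι → ℝ) :
    Uᵀ * conjDiagonal U d * U = diagonal d := by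
  have hU' : Uᵀ * U = 1 := mul_eq_one_comm.mp hU
  rw [conjDiagonal, show Uᵀ * (U * diagonal d * Uᵀ) * U = (Uᵀ * U) * diagonal d * (Uᵀ * U) by
    noncomm_ring, hU', Matrix.one_mul, Matrix.mul_one]

lemma trace_conjDiagonal (hU : U * Uᵀ = 1) (d : ι → ℝ) : (conjDiagonal U d).trace = ∑ i, d i := by
  rw [conjDiagonal, trace_mul_comm, ← Matrix.mul_assoc, mul_eq_one_comm.mp hU, Matrix.one_mul,
    trace_diagonal]

lemma frobSq_conjDiagonal (hU : U * Uᵀ = 1) (d : ι → ℝ) :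
    frobSq (conjDiagonal U d) = ∑ i, d i ^ 2 := by
  rw [conjDiagonal, frobSq_mul_orthogonal (by rwa [transpose_transpose, mul_eq_one_comm]),
    frobSq_orthogonal_mul (mul_eq_one_comm.mp hU), frobSq_diagonal]

lemma frobSq_conjDiagonal_mul_le (hU : U * Uᵀ = 1) {d : ι → ℝ} {c : ℝ} (hd : ∀ i, |d i| ≤ c)
    (M : Matrix ι ι ℝ) : frobSq (conjDiagonal U d * M) ≤ c ^ 2 * frobSq M := by
  rw [conjDiagonal, Matrix.mul_assoc, Matrix.mul_assoc,
    frobSq_orthogonal_mul (mul_eq_one_comm.mp hU), ← frobSq_orthogonal_mul (V := Uᵀ) (M := M)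
      (by rwa [transpose_transpose])]
  exact frobSq_diagonal_mul_le hd _

lemma posSemidef_conjDiagonal {d : ι → ℝ} (hd : ∀ i, 0 ≤ d i) : (conjDiagonal U d).PosSemidef := by
  simpa [conjDiagonal, conjTranspose_eq_transpose_of_trivial] using
    (PosSemidef.diagonal (R := ℝ) (n := ι) (fun i => hd i)).mul_mul_conjTranspose_same U

lemma rank_conjDiagonal_le (d : ι → ℝ) :
    (conjDiagonal U d).rank ≤ Fintype.card {i // d i ≠ 0} :=
  (rank_mul_le_left _ _).trans ((rank_mul_le_right _ _).trans (rank_diagonal d).le)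

end conjDiagonal

lemma rank_conjDiagonal_truncate_le {n : ℕ} (U : Matrix (Fin n) (Fin n) ℝ) (d : Fin n → ℝ)
    (p : ℕ) : (conjDiagonal U fun i => if (i : ℕ) < p then d i else 0).rank ≤ p := by
  refine (rank_conjDiagonal_le _).trans ?_
  calc Fintype.card {i : Fin n // (if (i : ℕ) < p then d i else 0) ≠ 0}
      ≤ Fintype.card (Fin p) :=
        Fintype.card_le_of_injective (fun i => ⟨i.1, of_not_not fun h => i.2 (if_neg h)⟩)
          fun a b h => Subtype.ext (Fin.ext (congrArg Fin.val h :))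
    _ = p := Fintype.card_fin p

lemma conjDiagonal_mul_inv_add_smul_one_sub_truncate {n : ℕ} {U : Matrix (Fin n) (Fin n) ℝ}
    (hU : U * Uᵀ = 1) {d : Fin n → ℝ} (hd : ∀ i, 0 ≤ d i) {c : ℝ} (hc : 0 < c) (p : ℕ) :
    conjDiagonal U d * (conjDiagonal U d + c • 1)⁻¹ -
        conjDiagonal U (fun i => if (i : ℕ) < p then d i else 0) *
          (conjDiagonal U (fun i => if (i : ℕ) < p then d i else 0) + c • 1)⁻¹ =
      conjDiagonal U fun i => if p ≤ (i : ℕ) then d i / (d i + c) else 0 := by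
  have hpos i : 0 < d i + c := add_pos_of_nonneg_of_pos (hd i) hc
  rw [conjDiagonal_mul_inv_add_smul_one hU fun i => (hpos i).ne',
    conjDiagonal_mul_inv_add_smul_one hU fun i => by split_ifs <;> simp [hc.ne', (hpos i).ne'],
    conjDiagonal_sub]
  congr 1
  funext i
  dsimp only [Pi.sub_apply]
  split_ifs <;> first | omega | simp

lemma IsHermitian.exists_eq_conjDiagonal {M : Matrix ι ι ℝ} (hM : M.IsHermitian) :
    ∃ W : Matrix ι ι ℝ, W * Wᵀ = 1 ∧ M = conjDiagonal W hM.eigenvalues := by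
  refine ⟨hM.eigenvectorUnitary, ?_, ?_⟩
  · have := mem_unitaryGroup_iff.mp hM.eigenvectorUnitary.2
    rwa [star_eq_conjTranspose, conjTranspose_eq_transpose_of_trivial] at this
  · simpa [conjDiagonal, Unitary.conjStarAlgAut_apply, star_eq_conjTranspose,
      conjTranspose_eq_transpose_of_trivial] using hM.spectral_theorem

lemma sum_abs_diag_conjDiagonal_le {P : Matrix ι ι ℝ} (hP : Pᵀ * P = 1) (d : ι → ℝ) :
    ∑ i, |conjDiagonal P d i i| ≤ ∑ j, |d j| := by
  have hcol : ∀ j, ∑ i, P i j ^ 2 = 1 := fun j => by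
    simpa [mul_apply, sq] using congrFun (congrFun hP j) j
  calc ∑ i, |conjDiagonal P d i i| = ∑ i, |∑ j, d j * P i j ^ 2| := by
        refine Finset.sum_congr rfl fun i _ => ?_
        rw [conjDiagonal, mul_apply]
        congr 1
        refine Finset.sum_congr rfl fun j _ => ?_
        rw [mul_diagonal, transpose_apply]
        ring
    _ ≤ ∑ i, ∑ j, |d j| * P i j ^ 2 := by
        gcongr with i
        refine (Finset.abs_sum_le_sum_abs _ _).trans_eq ?_
        simp [abs_mul]
    _ = ∑ j, |d j| := by
        rw [Finset.sum_comm]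
        simp [← Finset.mul_sum, hcol]

namespace IsHermitian

noncomputable def traceNorm {M : Matrix ι ι ℝ} (hM : M.IsHermitian) : ℝ :=
  ∑ i, |hM.eigenvalues i|

variable {M : Matrix ι ι ℝ}

lemma sum_abs_diag_conj_le_traceNorm (hM : M.IsHermitian) {V : Matrix ι ι ℝ} (hV : V * Vᵀ = 1) :
    ∑ i, |(Vᵀ * M * V) i i| ≤ hM.traceNorm := by
  obtain ⟨W, hW, hMW⟩ := hM.exists_eq_conjDiagonal
  have hconj : Vᵀ * M * V = conjDiagonal (Vᵀ * W) hM.eigenvalues := by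
    conv_lhs => rw [hMW]
    rw [conjDiagonal, conjDiagonal, transpose_mul, transpose_transpose]
    noncomm_ring
  have hVW : (Vᵀ * W)ᵀ * (Vᵀ * W) = 1 := by
    rw [transpose_mul, transpose_transpose, show Wᵀ * V * (Vᵀ * W) = Wᵀ * (V * Vᵀ) * W by
      noncomm_ring, hV, Matrix.mul_one, mul_eq_one_comm.mp hW]
  rw [hconj]
  exact sum_abs_diag_conjDiagonal_le hVW _

lemma traceNorm_le_add {X Y : Matrix ι ι ℝ} (hM : M.IsHermitian) (hX : X.IsHermitian)
    (hY : Y.IsHermitian) (hMXY : M = X + Y) :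
    hM.traceNorm ≤ hX.traceNorm + hY.traceNorm := by
  obtain ⟨W, hW, hMW⟩ := hM.exists_eq_conjDiagonal
  have hdiag : ∀ i, hM.eigenvalues i = (Wᵀ * X * W) i i + (Wᵀ * Y * W) i i := fun i => by
    rw [← add_apply, ← Matrix.add_mul, ← Matrix.mul_add, ← hMXY]
    conv_rhs => rw [hMW, transpose_mul_conjDiagonal_mul hW, diagonal_apply_eq]
  calc hM.traceNorm = ∑ i, |(Wᵀ * X * W) i i + (Wᵀ * Y * W) i i| := by
        simp only [traceNorm, hdiag]
    _ ≤ ∑ i, (|(Wᵀ * X * W) i i| + |(Wᵀ * Y * W) i i|) := by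
        gcongr with i
        exact abs_add_le _ _
    _ ≤ hX.traceNorm + hY.traceNorm := by
        rw [Finset.sum_add_distrib]
        exact add_le_add (hX.sum_abs_diag_conj_le_traceNorm hW)
          (hY.sum_abs_diag_conj_le_traceNorm hW)

lemma traceNorm_le_sqrt_mul_sqrt_frobSq (hM : M.IsHermitian) {r : ℕ} (hr : M.rank ≤ r) :
    hM.traceNorm ≤ √r * √(frobSq M) := by
  classical
  obtain ⟨W, hW, hMW⟩ := hM.exists_eq_conjDiagonal
  set e := hM.eigenvalues
  set s := Finset.univ.filter fun i => e i ≠ 0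
  have hcard : (s.card : ℝ) ≤ r := by
    rw [hM.rank_eq_card_non_zero_eigs, Fintype.card_subtype] at hr
    exact_mod_cast hr
  have htrace : hM.traceNorm = ∑ i ∈ s, |e i| :=
    (Finset.sum_filter_of_ne fun i _ h => abs_ne_zero.mp h).symm
  have hfrob : ∑ i ∈ s, e i ^ 2 ≤ frobSq M := by
    rw [hMW, frobSq_conjDiagonal hW]
    exact Finset.sum_le_sum_of_subset_of_nonneg (Finset.filter_subset _ _)
      fun i _ _ => sq_nonneg _
  rw [htrace, ← Real.sqrt_mul (Nat.cast_nonneg r)]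
  refine Real.le_sqrt_of_sq_le ?_
  calc (∑ i ∈ s, |e i|) ^ 2 ≤ s.card * ∑ i ∈ s, |e i| ^ 2 := sq_sum_le_card_mul_sum_sq
    _ ≤ r * frobSq M := by
        simp only [sq_abs]
        exact mul_le_mul hcard hfrob (Finset.sum_nonneg fun i _ => sq_nonneg _) (Nat.cast_nonneg r)

end IsHermitian

lemma PosSemidef.traceNorm_eq_trace {M : Matrix ι ι ℝ} (hM : M.PosSemidef) :
    hM.1.traceNorm = M.trace := by
  obtain ⟨W, hW, hMW⟩ := hM.1.exists_eq_conjDiagonal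
  rw [IsHermitian.traceNorm]
  conv_rhs => rw [hMW, trace_conjDiagonal hW]
  exact Finset.sum_congr rfl fun i _ => abs_of_nonneg (hM.eigenvalues_nonneg i)

lemma diag_conj_mul_self_sub_mul_self {S T W : Matrix ι ι ℝ} {δ : ι → ℝ} (hW : W * Wᵀ = 1)
    (hST : S - T = conjDiagonal W δ) (i : ι) :
    (Wᵀ * (S * S - T * T) * W) i i = δ i * ((Wᵀ * S * W) i i + (Wᵀ * T * W) i i) := by
  have hW' : Wᵀ * W = 1 := mul_eq_one_comm.mp hW
  have hright : (S - T) * W = W * diagonal δ := by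
    rw [hST, conjDiagonal, Matrix.mul_assoc, hW', Matrix.mul_one]
  have hleft : Wᵀ * (S - T) = diagonal δ * Wᵀ := by
    rw [hST, conjDiagonal, ← Matrix.mul_assoc, ← Matrix.mul_assoc, hW', Matrix.one_mul]
  have hsplit : Wᵀ * (S * S - T * T) * W
      = Wᵀ * S * ((S - T) * W) + (Wᵀ * (S - T)) * T * W := by noncomm_ring
  rw [hsplit, hright, hleft, add_apply, ← Matrix.mul_assoc, mul_diagonal,
    Matrix.mul_assoc (diagonal δ), Matrix.mul_assoc (diagonal δ), diagonal_mul]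
  ring

-- The Powers–Størmer inequality.
lemma frobSq_sub_le_traceNorm {S T : Matrix ι ι ℝ} (hS : S.PosSemidef) (hT : T.PosSemidef)
    (hST : (S * S - T * T).IsHermitian) : frobSq (S - T) ≤ hST.traceNorm := by
  obtain ⟨W, hW, hSTW⟩ := (hS.1.sub hT.1).exists_eq_conjDiagonal
  set δ := (hS.1.sub hT.1).eigenvalues
  have hSW := hS.conjTranspose_mul_mul_same W
  have hTW := hT.conjTranspose_mul_mul_same W
  rw [conjTranspose_eq_transpose_of_trivial] at hSW hTW
  have hδ : ∀ i, δ i = (Wᵀ * S * W) i i - (Wᵀ * T * W) i i := fun i => by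
    rw [← sub_apply, ← Matrix.sub_mul, ← Matrix.mul_sub, hSTW, transpose_mul_conjDiagonal_mul hW,
      diagonal_apply_eq]
  calc frobSq (S - T) = ∑ i, δ i ^ 2 := by rw [hSTW, frobSq_conjDiagonal hW]
    _ ≤ ∑ i, |(Wᵀ * (S * S - T * T) * W) i i| := by
        gcongr with i
        rw [diag_conj_mul_self_sub_mul_self hW hSTW, hδ, abs_mul]
        have ha := hSW.diag_nonneg (i := i)
        have hb := hTW.diag_nonneg (i := i)
        rw [abs_of_nonneg (add_nonneg ha hb), sq, ← abs_mul_abs_self]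
        gcongr
        exact abs_sub_le_iff.mpr ⟨by linarith, by linarith⟩
    _ ≤ hST.traceNorm := hST.sum_abs_diag_conj_le_traceNorm hW

lemma rank_sub_le {m n K : Type*} [Fintype m] [Fintype n] [Field K] (A B : Matrix m n K) :
    (A - B).rank ≤ A.rank + B.rank :=
  calc (A - B).rank
      ≤ Module.finrank K ↥(LinearMap.range A.mulVecLin ⊔ LinearMap.range B.mulVecLin) :=
        Submodule.finrank_mono <| by
          rintro _ ⟨v, rfl⟩
          simpa [sub_mulVec] using Submodule.sub_mem_sup (LinearMap.mem_range_self A.mulVecLin v)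
            (LinearMap.mem_range_self B.mulVecLin v)
    _ ≤ A.rank + B.rank := Submodule.finrank_add_le_finrank_add_finrank _ _

section CommRing

variable {R : Type*} [CommRing R] {A B : Matrix ι ι R} {c : R}

lemma mul_inv_add_smul_one (hA : IsUnit (A + c • 1).det) :
    A * (A + c • 1)⁻¹ = 1 - c • (A + c • 1)⁻¹ := by
  have h := mul_nonsing_inv _ hA
  rw [Matrix.add_mul, Matrix.smul_mul, Matrix.one_mul] at h
  exact eq_sub_of_add_eq h

lemma mul_inv_add_smul_one_sub (hA : IsUnit (A + c • 1).det) (hB : IsUnit (B + c • 1).det) :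
    A * (A + c • 1)⁻¹ - B * (B + c • 1)⁻¹ = c • ((B + c • 1)⁻¹ * (A - B) * (A + c • 1)⁻¹) := by
  have hres : (B + c • 1)⁻¹ * (A - B) * (A + c • 1)⁻¹ = (B + c • 1)⁻¹ - (A + c • 1)⁻¹ := by
    rw [show A - B = (A + c • 1) - (B + c • 1) by abel, Matrix.mul_sub, Matrix.sub_mul,
      Matrix.mul_assoc, mul_nonsing_inv _ hA, nonsing_inv_mul _ hB, Matrix.mul_one, Matrix.one_mul]
  rw [hres, mul_inv_add_smul_one hA, mul_inv_add_smul_one hB, smul_sub]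
  abel

end CommRing

namespace PosSemidef

variable {A B : Matrix ι ι ℝ} {c : ℝ}

lemma isUnit_det_add_smul_one (hA : A.PosSemidef) (hc : 0 < c) : IsUnit (A + c • 1).det :=
  (isUnit_iff_isUnit_det _).mp (PosDef.posSemidef_add hA (PosDef.one.smul hc)).isUnit

lemma mul_inv_add_smul_one (hA : A.PosSemidef) (hc : 0 < c) :
    (A * (A + c • 1)⁻¹).PosSemidef := by
  obtain ⟨W, hW, hAW⟩ := hA.1.exists_eq_conjDiagonal
  have hpos i : 0 < hA.1.eigenvalues i + c := add_pos_of_nonneg_of_pos (hA.eigenvalues_nonneg i) hc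
  rw [hAW, conjDiagonal_mul_inv_add_smul_one hW fun i => (hpos i).ne']
  exact posSemidef_conjDiagonal fun i => div_nonneg (hA.eigenvalues_nonneg i) (hpos i).le

lemma frobSq_inv_add_smul_one_mul_le (hA : A.PosSemidef) (hc : 0 < c) (E : Matrix ι ι ℝ) :
    frobSq ((A + c • 1)⁻¹ * E) ≤ c⁻¹ ^ 2 * frobSq E := by
  obtain ⟨W, hW, hAW⟩ := hA.1.exists_eq_conjDiagonal
  have hpos i : 0 < hA.1.eigenvalues i + c := add_pos_of_nonneg_of_pos (hA.eigenvalues_nonneg i) hc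
  rw [hAW, ← conjDiagonal_const hW, conjDiagonal_add,
    conjDiagonal_inv hW (d := hA.1.eigenvalues + fun _ => c) fun i => (hpos i).ne']
  refine frobSq_conjDiagonal_mul_le hW (fun i => ?_) E
  rw [Pi.inv_apply, Pi.add_apply, abs_of_pos (inv_pos.mpr (hpos i))]
  exact inv_anti₀ hc (le_add_of_nonneg_left (hA.eigenvalues_nonneg i))

lemma frobSq_mul_inv_add_smul_one_le (hA : A.PosSemidef) (hc : 0 < c) (E : Matrix ι ι ℝ) :
    frobSq (E * (A + c • 1)⁻¹) ≤ c⁻¹ ^ 2 * frobSq E := by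
  have hAT : Aᵀ = A := by rw [← conjTranspose_eq_transpose_of_trivial]; exact hA.1
  rw [← frobSq_transpose, transpose_mul, transpose_nonsing_inv, transpose_add, transpose_smul,
    transpose_one, hAT, ← frobSq_transpose E]
  exact hA.frobSq_inv_add_smul_one_mul_le hc Eᵀ

lemma traceNorm_mul_inv_add_smul_one_sub_le (hA : A.PosSemidef) (hB : B.PosSemidef) {p : ℕ}
    (hAp : A.rank ≤ p) (hBp : B.rank ≤ p) (hc : 0 < c) {ε : ℝ} (hAB : √(frobSq (A - B)) ≤ ε) :
    ((hA.mul_inv_add_smul_one hc).1.sub (hB.mul_inv_add_smul_one hc).1).traceNorm ≤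
      √(2 * p) * ε / c := by
  set Y := A * (A + c • 1)⁻¹ - B * (B + c • 1)⁻¹
  have hrank : Y.rank ≤ 2 * p :=
    (rank_sub_le _ _).trans <| (add_le_add ((rank_mul_le_left A _).trans hAp)
      ((rank_mul_le_left B _).trans hBp)).trans_eq (two_mul p).symm
  have hY : Y = c • ((B + c • 1)⁻¹ * (A - B) * (A + c • 1)⁻¹) :=
    mul_inv_add_smul_one_sub (hA.isUnit_det_add_smul_one hc) (hB.isUnit_det_add_smul_one hc)
  have hfrob : frobSq Y ≤ frobSq (A - B) / c ^ 2 :=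
    calc frobSq Y = c ^ 2 * frobSq ((B + c • 1)⁻¹ * ((A - B) * (A + c • 1)⁻¹)) := by
          rw [hY, frobSq_smul, Matrix.mul_assoc]
      _ ≤ c ^ 2 * (c⁻¹ ^ 2 * (c⁻¹ ^ 2 * frobSq (A - B))) := by
          gcongr
          refine (hB.frobSq_inv_add_smul_one_mul_le hc _).trans ?_
          gcongr
          exact hA.frobSq_mul_inv_add_smul_one_le hc _
      _ = frobSq (A - B) / c ^ 2 := by field_simp
  have hfrob' : √(frobSq Y) ≤ ε / c := by
    refine (Real.sqrt_le_sqrt hfrob).trans ?_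
    rw [Real.sqrt_div' _ (sq_nonneg c), Real.sqrt_sq hc.le]
    exact div_le_div_of_nonneg_right hAB hc.le
  calc _ ≤ √((2 * p : ℕ) : ℝ) * √(frobSq Y) := IsHermitian.traceNorm_le_sqrt_mul_sqrt_frobSq _ hrank
    _ ≤ √(2 * p) * (ε / c) := by
        push_cast
        gcongr
    _ = √(2 * p) * ε / c := (mul_div_assoc _ _ _).symm

end PosSemidef

end Matrix

theorem stmt_18_general {n : ℕ} (U : Matrix (Fin n) (Fin n) ℝ) (hU : U * Uᵀ = 1)
    (lam : Fin n → ℝ) (hnn : ∀ i, 0 ≤ lam i)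
    (σ : ℝ) (hσ : 0 < σ) (p : ℕ) (ε : ℝ)
    (K Kp : Matrix (Fin n) (Fin n) ℝ)
    (hK : K = U * Matrix.diagonal lam * Uᵀ)
    (hKp : Kp = U * Matrix.diagonal (fun i : Fin n => if (i : ℕ) < p then lam i else 0) * Uᵀ)
    (Q : Matrix (Fin n) (Fin n) ℝ) (hQ : Q.PosSemidef) (hQrank : Q.rank ≤ p)
    (hQε : frobNorm (Kp - Q) ≤ ε)
    (S SQ : Matrix (Fin n) (Fin n) ℝ)
    (hS : S.PosSemidef) (hSsq : S * S = K * (K + σ ^ 2 • (1 : Matrix (Fin n) (Fin n) ℝ))⁻¹)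
    (hSQ : SQ.PosSemidef)
    (hSQsq : SQ * SQ = Q * (Q + σ ^ 2 • (1 : Matrix (Fin n) (Fin n) ℝ))⁻¹) :
    frobNorm (S - SQ) ^ 2 ≤
      (∑ i ∈ Finset.univ.filter (fun i : Fin n => p ≤ (i : ℕ)), lam i / (lam i + σ ^ 2)) +
        Real.sqrt (2 * p) * ε / σ ^ 2 := by
  have hσ2 : 0 < σ ^ 2 := by positivity
  have hK' : K = conjDiagonal U lam := hK
  have hKp' : Kp = conjDiagonal U fun i => if (i : ℕ) < p then lam i else 0 := hKp
  have hKpPSD : Kp.PosSemidef :=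
    hKp' ▸ posSemidef_conjDiagonal fun i => by split_ifs <;> simp [hnn i]
  have hX := conjDiagonal_mul_inv_add_smul_one_sub_truncate hU hnn hσ2 p
  rw [← hK', ← hKp', ← hSsq] at hX
  set tail : Fin n → ℝ := fun i => if p ≤ (i : ℕ) then lam i / (lam i + σ ^ 2) else 0
  have hXPSD : (conjDiagonal U tail).PosSemidef := posSemidef_conjDiagonal fun i => by
    dsimp only [tail]
    split_ifs
    exacts [div_nonneg (hnn i) (add_pos_of_nonneg_of_pos (hnn i) hσ2).le, le_rfl]
  have hY := (hKpPSD.mul_inv_add_smul_one hσ2).1.sub (hQ.mul_inv_add_smul_one hσ2).1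
  have hsplit : S * S - SQ * SQ =
      conjDiagonal U tail + (Kp * (Kp + σ ^ 2 • 1)⁻¹ - Q * (Q + σ ^ 2 • 1)⁻¹) := by
    rw [hSQsq, ← hX]; abel
  have hZ : (S * S - SQ * SQ).IsHermitian := hsplit ▸ hXPSD.1.add hY
  calc frobNorm (S - SQ) ^ 2 = frobSq (S - SQ) := Real.sq_sqrt (frobSq_nonneg _)
    _ ≤ hZ.traceNorm := frobSq_sub_le_traceNorm hS hSQ hZ
    _ ≤ hXPSD.1.traceNorm + hY.traceNorm := hZ.traceNorm_le_add _ _ hsplit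
    _ ≤ _ := by
        rw [hXPSD.traceNorm_eq_trace, trace_conjDiagonal hU, Finset.sum_filter]
        exact add_le_add le_rfl (hKpPSD.traceNorm_mul_inv_add_smul_one_sub_le hQ
          (hKp' ▸ rank_conjDiagonal_truncate_le U lam p) hQrank hσ2 hQε)

/-- Covariance term of the posterior Wasserstein-2 bound: with `K = U diag(λ) Uᵀ`
(`U` orthogonal, `λ` nonincreasing, nonnegative), `K_p` the rank-`p` truncation (`p < n`),
`Q` symmetric positive semidefinite of rank at most `p` with `‖K_p − Q‖_F ≤ ε`, and `S, S_Q`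
the (unique) positive semidefinite square roots of `K(K+σ²I)⁻¹` and `Q(Q+σ²I)⁻¹`,
`‖S − S_Q‖_F² ≤ Σ_{i>p} λ_i/(λ_i+σ²) + √(2p)·ε/σ²`. -/
theorem stmt_18 {n : ℕ} (U : Matrix (Fin n) (Fin n) ℝ) (hU : U * Uᵀ = 1)
    (lam : Fin n → ℝ) (hmono : Antitone lam) (hnn : ∀ i, 0 ≤ lam i)
    (σ : ℝ) (hσ : 0 < σ) (p : ℕ) (hp : p < n) (ε : ℝ)
    (K Kp : Matrix (Fin n) (Fin n) ℝ)
    (hK : K = U * Matrix.diagonal lam * Uᵀ)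
    (hKp : Kp = U * Matrix.diagonal (fun i : Fin n => if (i : ℕ) < p then lam i else 0) * Uᵀ)
    (Q : Matrix (Fin n) (Fin n) ℝ) (hQ : Q.PosSemidef) (hQrank : Q.rank ≤ p)
    (hQε : frobNorm (Kp - Q) ≤ ε)
    (S SQ : Matrix (Fin n) (Fin n) ℝ)
    (hS : S.PosSemidef) (hSsq : S * S = K * (K + σ ^ 2 • (1 : Matrix (Fin n) (Fin n) ℝ))⁻¹)
    (hSQ : SQ.PosSemidef)
    (hSQsq : SQ * SQ = Q * (Q + σ ^ 2 • (1 : Matrix (Fin n) (Fin n) ℝ))⁻¹) :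
    frobNorm (S - SQ) ^ 2 ≤
      (∑ i ∈ Finset.univ.filter (fun i : Fin n => p ≤ (i : ℕ)), lam i / (lam i + σ ^ 2)) +
        Real.sqrt (2 * p) * ε / σ ^ 2 :=
  stmt_18_general U hU lam hnn σ hσ p ε K Kp hK hKp Q hQ hQrank hQε S SQ hS hSsq hSQ hSQsq
end
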